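/- arXiv:2510.08518 — 3 statements merged into one kernel-verified Lean document; each statement's English description precedes it below -/
import Mathlib

section
/- For any unit vector v ∈ ℂ^d and any density matrix σ on ℂ^d, the maximum of tr(M(vv† − σ)) over all Hermitian M with 0 ≼ M ≼ 1 is attained by a matrix of rank at most 1. -/
open scoped ComplexOrder Matrix

/-! In an eigenbasis of the Hermitian matrix `A = vv† - σ`, a contraction `0 ≼ N ≼ 1` has diagonal
entries in `[0, 1]`, so `tr (N A) ≤ ∑_{λᵢ > 0} λᵢ`, with equality for the projection onto the
positive eigenspace. Since `A ≼ vv†`, that eigenspace has dimension at most one: a two-dimensional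
one would contain a nonzero vector orthogonal to `v`, on which the form of `A` is both positive
and nonpositive. -/

namespace Matrix

variable {n 𝕜 : Type*} [RCLike 𝕜]

theorem re_diag_le_one_of_posSemidef_one_sub [DecidableEq n] {N : Matrix n n 𝕜}
    (h : (1 - N).PosSemidef) (i : n) : RCLike.re (N i i) ≤ 1 := by
  have := (RCLike.nonneg_iff.1 (h.diag_nonneg (i := i))).1
  simp only [sub_apply, one_apply_eq, map_sub, RCLike.one_re] at this
  linarith

variable [Fintype n]

theorem re_star_dotProduct_vecMulVec_sub_mulVec_le {σ : Matrix n n 𝕜} (hσ : σ.PosSemidef)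
    (v w : n → 𝕜) :
    RCLike.re (star w ⬝ᵥ (vecMulVec v (star v) - σ) *ᵥ w) ≤ ‖star v ⬝ᵥ w‖ ^ 2 := by
  have hσw := (RCLike.nonneg_iff.1 (hσ.dotProduct_mulVec_nonneg w)).1
  have hvw : star w ⬝ᵥ vecMulVec v (star v) *ᵥ w = ‖star v ⬝ᵥ w‖ ^ 2 := by
    rw [dotProduct_mulVec, vecMul_vecMulVec, smul_dotProduct, smul_eq_mul, star_dotProduct,
      RCLike.star_def, RCLike.conj_mul]
  rw [sub_mulVec, dotProduct_sub, map_sub, hvw, ← RCLike.ofReal_pow, RCLike.ofReal_re]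
  linarith

variable [DecidableEq n]

theorem card_pos_le_one_of_sum_mul_norm_sq_le {μ : n → ℝ} {z : n → 𝕜}
    (h : ∀ y : n → 𝕜, ∑ i, μ i * ‖y i‖ ^ 2 ≤ ‖star z ⬝ᵥ y‖ ^ 2) :
    Fintype.card {i // 0 < μ i} ≤ 1 := by
  refine Fintype.card_le_one_iff.2 fun ⟨i, hi⟩ ⟨j, hj⟩ => Subtype.ext ?_
  change i = j
  by_contra hij
  have hle_single (k : n) : μ k ≤ ‖z k‖ ^ 2 := by
    have := h (Pi.single k 1)
    rw [Fintype.sum_eq_single k fun l hl => by simp [hl], dotProduct_single] at this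
    simpa using this
  set y : n → 𝕜 := Pi.single i (star (z j)) - Pi.single j (star (z i))
  have horth : star z ⬝ᵥ y = 0 := by simp [y, dotProduct_sub, dotProduct_single, mul_comm]
  have hneg : μ i * ‖z j‖ ^ 2 + μ j * ‖z i‖ ^ 2 ≤ 0 := by
    have := h y
    rw [horth, Fintype.sum_eq_add i j hij fun k hk => by simp [y, hk.1, hk.2]] at this
    simpa [y, hij, Ne.symm hij] using this
  nlinarith [hle_single i, hle_single j]

namespace IsHermitian

variable {A : Matrix n n 𝕜} (hA : A.IsHermitian)

theorem star_eigenvectorUnitary_mul_mul_eigenvectorUnitary :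
    star (hA.eigenvectorUnitary : Matrix n n 𝕜) * A * (hA.eigenvectorUnitary : Matrix n n 𝕜) =
      diagonal (RCLike.ofReal ∘ hA.eigenvalues) := by
  rw [← Unitary.conjStarAlgAut_star_apply (S := 𝕜), hA.conjStarAlgAut_star_eigenvectorUnitary]

theorem re_star_mulVec_dotProduct_mulVec (y : n → 𝕜) :
    RCLike.re (star ((hA.eigenvectorUnitary : Matrix n n 𝕜) *ᵥ y) ⬝ᵥ
        A *ᵥ ((hA.eigenvectorUnitary : Matrix n n 𝕜) *ᵥ y)) =
      ∑ i, hA.eigenvalues i * ‖y i‖ ^ 2 := by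
  set U : Matrix n n 𝕜 := ↑hA.eigenvectorUnitary
  have : star (U *ᵥ y) ⬝ᵥ A *ᵥ (U *ᵥ y) = star y ⬝ᵥ (star U * A * U) *ᵥ y := by
    rw [star_mulVec, dotProduct_mulVec, vecMul_vecMul, ← dotProduct_mulVec, mulVec_mulVec,
      star_eq_conjTranspose]
  rw [this, hA.star_eigenvectorUnitary_mul_mul_eigenvectorUnitary]
  simp only [dotProduct, mulVec_diagonal, Pi.star_apply, Function.comp_apply, map_sum]
  refine Finset.sum_congr rfl fun i _ => ?_
  rw [mul_left_comm, RCLike.star_def, RCLike.conj_mul, RCLike.re_ofReal_mul, ← RCLike.ofReal_pow,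
    RCLike.ofReal_re]

theorem re_trace_mul_eq_sum (N : Matrix n n 𝕜) :
    RCLike.re (N * A).trace = ∑ i,
      RCLike.re ((star (hA.eigenvectorUnitary : Matrix n n 𝕜) * N *
        (hA.eigenvectorUnitary : Matrix n n 𝕜)) i i) *
        hA.eigenvalues i := by
  set U : Matrix n n 𝕜 := ↑hA.eigenvectorUnitary
  have hU : U * star U = 1 := Unitary.coe_mul_star_self _
  calc RCLike.re (N * A).trace = RCLike.re (star U * (N * A) * U).trace := by
        rw [trace_mul_cycle, hU, one_mul]
    _ = RCLike.re ((star U * N * U) * (star U * A * U)).trace := by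
        simp only [mul_assoc]
        rw [← mul_assoc U, hU, one_mul]
    _ = _ := by
        rw [hA.star_eigenvectorUnitary_mul_mul_eigenvectorUnitary]
        simp [trace, mul_diagonal]

theorem card_pos_eigenvalues_le_one_of_re_dotProduct_mulVec_le {v : n → 𝕜}
    (h : ∀ w, RCLike.re (star w ⬝ᵥ A *ᵥ w) ≤ ‖star v ⬝ᵥ w‖ ^ 2) :
    Fintype.card {i // 0 < hA.eigenvalues i} ≤ 1 := by
  set U : Matrix n n 𝕜 := ↑hA.eigenvectorUnitary
  refine card_pos_le_one_of_sum_mul_norm_sq_le (z := star U *ᵥ v) fun y => ?_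
  have hvU : star v ⬝ᵥ U *ᵥ y = star (star U *ᵥ v) ⬝ᵥ y := by
    rw [star_mulVec, star_eq_conjTranspose, conjTranspose_conjTranspose, dotProduct_mulVec]
  rw [← hA.re_star_mulVec_dotProduct_mulVec, ← hvU]
  exact h _

noncomputable def posEigenprojection : Matrix n n 𝕜 :=
  (hA.eigenvectorUnitary : Matrix n n 𝕜) *
    diagonal (fun i => if 0 < hA.eigenvalues i then 1 else 0) *
      star (hA.eigenvectorUnitary : Matrix n n 𝕜)

theorem star_eigenvectorUnitary_mul_posEigenprojection_mul_eigenvectorUnitary :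
    star (hA.eigenvectorUnitary : Matrix n n 𝕜) * hA.posEigenprojection *
        (hA.eigenvectorUnitary : Matrix n n 𝕜) =
      diagonal (fun i => if 0 < hA.eigenvalues i then 1 else 0) := by
  simp only [posEigenprojection, mul_assoc, Unitary.coe_star_mul_self, mul_one]
  rw [← mul_assoc, Unitary.coe_star_mul_self, one_mul]

theorem posSemidef_posEigenprojection : hA.posEigenprojection.PosSemidef :=
  (PosSemidef.diagonal fun i => by split_ifs <;> simp).mul_mul_conjTranspose_same _

theorem posSemidef_one_sub_posEigenprojection : (1 - hA.posEigenprojection).PosSemidef := by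
  have : 1 - hA.posEigenprojection = (hA.eigenvectorUnitary : Matrix n n 𝕜) *
      diagonal (fun i => if 0 < hA.eigenvalues i then 0 else 1) *
        star (hA.eigenvectorUnitary : Matrix n n 𝕜) := by
    have : diagonal (fun i => if 0 < hA.eigenvalues i then (0 : 𝕜) else 1) =
        1 - diagonal (fun i => if 0 < hA.eigenvalues i then 1 else 0) := by
      rw [← diagonal_one, diagonal_sub]
      congr with i
      split_ifs <;> simp
    rw [this, mul_sub, sub_mul, mul_one, Unitary.mul_star_self_of_mem hA.eigenvectorUnitary.2,
      posEigenprojection]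
  rw [this]
  exact (PosSemidef.diagonal fun i => by split_ifs <;> simp).mul_mul_conjTranspose_same _

theorem rank_posEigenprojection_le :
    hA.posEigenprojection.rank ≤ Fintype.card {i // 0 < hA.eigenvalues i} := by
  classical
  calc hA.posEigenprojection.rank
      ≤ (diagonal fun i => if 0 < hA.eigenvalues i then (1 : 𝕜) else 0).rank :=
        (rank_mul_le_left _ _).trans (rank_mul_le_right _ _)
    _ = Fintype.card {i // 0 < hA.eigenvalues i} := by
        rw [rank_diagonal]
        exact Fintype.card_congr (Equiv.subtypeEquivRight fun i => by simp)

theorem re_trace_mul_le_re_trace_posEigenprojection_mul {N : Matrix n n 𝕜}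
    (hN : N.PosSemidef) (hN1 : (1 - N).PosSemidef) :
    RCLike.re (N * A).trace ≤ RCLike.re (hA.posEigenprojection * A).trace := by
  rw [hA.re_trace_mul_eq_sum, hA.re_trace_mul_eq_sum,
    star_eigenvectorUnitary_mul_posEigenprojection_mul_eigenvectorUnitary]
  refine Finset.sum_le_sum fun i _ => ?_
  set U : Matrix n n 𝕜 := ↑hA.eigenvectorUnitary
  have hUN : (star U * N * U).PosSemidef := hN.conjTranspose_mul_mul_same U
  have hUN1 : (1 - star U * N * U).PosSemidef := by
    have := hN1.conjTranspose_mul_mul_same U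
    rwa [mul_sub, sub_mul, mul_one, ← star_eq_conjTranspose, Unitary.coe_star_mul_self] at this
  rw [diagonal_apply_eq]
  have h0 := (RCLike.nonneg_iff.1 (hUN.diag_nonneg (i := i))).1
  have h1 := re_diag_le_one_of_posSemidef_one_sub hUN1 i
  split_ifs <;> simp only [RCLike.one_re, one_mul, map_zero, zero_mul] <;> nlinarith

end IsHermitian

end Matrix

theorem stmt5_general (d : ℕ) (v : Fin d → ℂ)
    (σ : Matrix (Fin d) (Fin d) ℂ) (hσ : σ.PosSemidef) :
    ∃ M : Matrix (Fin d) (Fin d) ℂ, M.PosSemidef ∧ (1 - M).PosSemidef ∧ M.rank ≤ 1 ∧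
      ∀ N : Matrix (Fin d) (Fin d) ℂ, N.PosSemidef → (1 - N).PosSemidef →
        (Matrix.trace (N * (Matrix.vecMulVec v (star v) - σ))).re ≤
          (Matrix.trace (M * (Matrix.vecMulVec v (star v) - σ))).re := by
  have hA : (Matrix.vecMulVec v (star v) - σ).IsHermitian :=
    (Matrix.posSemidef_vecMulVec_self_star v).isHermitian.sub hσ.isHermitian
  refine ⟨hA.posEigenprojection, hA.posSemidef_posEigenprojection,
    hA.posSemidef_one_sub_posEigenprojection, ?_,
    fun N hN hN1 => hA.re_trace_mul_le_re_trace_posEigenprojection_mul hN hN1⟩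
  exact hA.rank_posEigenprojection_le.trans <|
    hA.card_pos_eigenvalues_le_one_of_re_dotProduct_mulVec_le
      (Matrix.re_star_dotProduct_vecMulVec_sub_mulVec_le hσ v)

/-- the maximum of `tr(M (vv† − σ))` over Hermitian `0 ≼ M ≼ 1` is attained
at a matrix of rank at most 1. -/
theorem stmt5 (d : ℕ) (v : Fin d → ℂ) (hv : ∑ i, ‖v i‖ ^ 2 = 1)
    (σ : Matrix (Fin d) (Fin d) ℂ) (hσ : σ.PosSemidef) (hσtr : σ.trace = 1) :
    ∃ M : Matrix (Fin d) (Fin d) ℂ, M.PosSemidef ∧ (1 - M).PosSemidef ∧ M.rank ≤ 1 ∧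
      ∀ N : Matrix (Fin d) (Fin d) ℂ, N.PosSemidef → (1 - N).PosSemidef →
        (Matrix.trace (N * (Matrix.vecMulVec v (star v) - σ))).re ≤
          (Matrix.trace (M * (Matrix.vecMulVec v (star v) - σ))).re :=
  stmt5_general d v σ hσ
end

section
/- Let v ∈ ℂ^d be a unit vector, let S be a random variable and w(S) a random unit vector in ℂ^d such that E[w(S)w(S)†] = σ. Then E[T(v, w(S))] ≤ √(T(v,σ)), where T denotes trace distance. -/
open scoped BigOperators
open MeasureTheory Matrix

/-- Jensen's inequality for the square root under a probability measure. -/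
lemma jensen_sqrt' {Ω : Type} [MeasurableSpace Ω] (P : Measure Ω) [IsProbabilityMeasure P]
    (f : Ω → ℝ) (hf : Integrable f P) (h0 : ∀ ω, 0 ≤ f ω)
    (hsf : Integrable (fun ω => Real.sqrt (f ω)) P) :
    ∫ ω, Real.sqrt (f ω) ∂P ≤ Real.sqrt (∫ ω, f ω ∂P) := by
  set c := ∫ ω, f ω ∂P with hc
  have hc0 : 0 ≤ c := integral_nonneg h0
  rcases eq_or_lt_of_le hc0 with h | h
  · have hae : f =ᵐ[P] 0 := by
      rw [← integral_eq_zero_iff_of_nonneg h0 hf, ← hc, ← h]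
    have : (fun ω => Real.sqrt (f ω)) =ᵐ[P] 0 := by
      filter_upwards [hae] with ω hw
      simp [hw]
    rw [integral_congr_ae this]
    simp [Real.sqrt_nonneg]
  · have hsc : (0:ℝ) < Real.sqrt c := Real.sqrt_pos.mpr h
    have hpt : ∀ ω, Real.sqrt (f ω) ≤ Real.sqrt c + (f ω - c) / (2 * Real.sqrt c) := by
      intro ω
      rw [← sub_nonneg]
      have key : Real.sqrt c + (f ω - c) / (2 * Real.sqrt c) - Real.sqrt (f ω)
          = (Real.sqrt (f ω) - Real.sqrt c) ^ 2 / (2 * Real.sqrt c) := by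
        field_simp
        nlinarith [Real.sq_sqrt (h0 ω), Real.sq_sqrt hc0]
      rw [key]
      positivity
    have hi3 : Integrable (fun ω => (f ω - c) / (2 * Real.sqrt c)) P := by
      exact (hf.sub (integrable_const _)).div_const _
    have hi2 : Integrable (fun ω => Real.sqrt c + (f ω - c) / (2 * Real.sqrt c)) P :=
      (integrable_const _).add hi3
    calc ∫ ω, Real.sqrt (f ω) ∂P
        ≤ ∫ ω, (Real.sqrt c + (f ω - c) / (2 * Real.sqrt c)) ∂P :=
          integral_mono hsf hi2 hpt
      _ = Real.sqrt c := by
          rw [integral_add (integrable_const _) hi3, integral_const]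
          have : ∫ ω, (f ω - c) / (2 * Real.sqrt c) ∂P
              = (∫ ω, (f ω - c) ∂P) / (2 * Real.sqrt c) := integral_div _ _
          rw [this, integral_sub hf (integrable_const _), integral_const]
          simp [← hc]

lemma dot_star_self' {d : ℕ} (u : Fin d → ℂ) :
    dotProduct (star u) u = ((∑ i, ‖u i‖ ^ 2 : ℝ) : ℂ) := by
  push_cast
  simp [dotProduct, Pi.star_apply, RCLike.star_def, RCLike.conj_mul]

/-- Rayleigh-type bound: for a traceless Hermitian matrix and a unit vector,
`re ⟨v, A v⟩ ≤ (1/2) ∑ |λ i|`. -/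
lemma quad_form_le' {d : ℕ} {A : Matrix (Fin d) (Fin d) ℂ} (hA : A.IsHermitian)
    (htr : A.trace = 0) (v : Fin d → ℂ) (hv : ∑ i, ‖v i‖ ^ 2 = 1) :
    (dotProduct (star v) (A.mulVec v)).re ≤ (1/2) * ∑ i, |hA.eigenvalues i| := by
  set U : Matrix (Fin d) (Fin d) ℂ := (hA.eigenvectorUnitary : Matrix (Fin d) (Fin d) ℂ) with hU
  have hUU : U * star U = 1 := (Matrix.mem_unitaryGroup_iff).mp hA.eigenvectorUnitary.2
  set y : Fin d → ℂ := (star U) *ᵥ v with hy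
  have hyst : star v ᵥ* U = star y := by
    rw [hy, star_mulVec]
    simp [Matrix.star_eq_conjTranspose, Matrix.conjTranspose_conjTranspose]
  -- sum of |y i|^2 = 1
  have hysum : ∑ i, ‖y i‖ ^ 2 = 1 := by
    have h1 : dotProduct (star y) y = 1 := by
      rw [← hyst, hy, dotProduct_mulVec, vecMul_vecMul,
        show star v ᵥ* (U * star U) = star v ᵥ* (1 : Matrix (Fin d) (Fin d) ℂ) by rw [hUU],
        vecMul_one, dot_star_self', hv]
      norm_num
    rw [dot_star_self'] at h1
    exact_mod_cast h1
  -- eigenvalue sum is zero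
  have hevsum : ∑ i, hA.eigenvalues i = 0 := by
    have h2 : A.trace = ∑ i, (hA.eigenvalues i : ℂ) := by
      conv_lhs => rw [hA.spectral_theorem, Unitary.conjStarAlgAut_apply]
      rw [Matrix.trace_mul_cycle,
        (Matrix.mem_unitaryGroup_iff').mp hA.eigenvectorUnitary.2, Matrix.one_mul,
        Matrix.trace_diagonal]
      rfl
    rw [htr] at h2
    exact_mod_cast h2.symm
  -- quadratic form as weighted eigenvalue sum
  have hq : (dotProduct (star v) (A.mulVec v)).re
      = ∑ i, hA.eigenvalues i * ‖y i‖ ^ 2 := by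
    conv_lhs => rw [hA.spectral_theorem, Unitary.conjStarAlgAut_apply]
    rw [← Matrix.mulVec_mulVec, ← Matrix.mulVec_mulVec, dotProduct_mulVec, hyst, ← hy]
    have step1 : dotProduct (star y) (diagonal (RCLike.ofReal ∘ hA.eigenvalues) *ᵥ y)
        = ∑ i, (hA.eigenvalues i : ℂ) * (star (y i) * y i) := by
      simp only [dotProduct, Matrix.mulVec_diagonal, Function.comp_apply, Pi.star_apply]
      exact Finset.sum_congr rfl fun i _ => by rw [mul_left_comm]; norm_cast
    have step2 : ∀ i, (hA.eigenvalues i : ℂ) * (star (y i) * y i)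
        = ((hA.eigenvalues i * ‖y i‖ ^ 2 : ℝ) : ℂ) := fun i => by
      rw [RCLike.star_def, RCLike.conj_mul]; simp [RCLike.ofReal_alg]
    rw [step1, Finset.sum_congr rfl fun i _ => step2 i, ← Complex.ofReal_sum,
      Complex.ofReal_re]
  rw [hq]
  have hbound : ∀ i, hA.eigenvalues i * ‖y i‖ ^ 2 ≤ max (hA.eigenvalues i) 0 := by
    intro i
    have h1 : ‖y i‖ ^ 2 ≤ 1 := by
      rw [← hysum]
      exact Finset.single_le_sum (f := fun j => ‖y j‖ ^ 2) (fun j _ => by positivity)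
        (Finset.mem_univ i)
    have h2 : (0:ℝ) ≤ ‖y i‖ ^ 2 := by positivity
    rcases le_total (hA.eigenvalues i) 0 with h | h
    · calc hA.eigenvalues i * ‖y i‖ ^ 2 ≤ 0 := mul_nonpos_of_nonpos_of_nonneg h h2
        _ ≤ max _ 0 := le_max_right _ _
    · calc hA.eigenvalues i * ‖y i‖ ^ 2 ≤ hA.eigenvalues i * 1 := by nlinarith
        _ ≤ max _ 0 := by rw [mul_one]; exact le_max_left _ _
  calc ∑ i, hA.eigenvalues i * ‖y i‖ ^ 2 ≤ ∑ i, max (hA.eigenvalues i) 0 :=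
        Finset.sum_le_sum fun i _ => hbound i
    _ = (1/2) * ∑ i, (|hA.eigenvalues i| + hA.eigenvalues i) := by
        rw [Finset.mul_sum]
        refine Finset.sum_congr rfl fun i _ => ?_
        rcases le_total (hA.eigenvalues i) 0 with h | h
        · rw [max_eq_right h, abs_of_nonpos h]; ring
        · rw [max_eq_left h, abs_of_nonneg h]; ring
    _ = (1/2) * ∑ i, |hA.eigenvalues i| := by
        rw [Finset.sum_add_distrib, hevsum, add_zero]

/-- if `w(S)` is a random unit vector with `E[w w†] = σ`, then
`E[T(v, w(S))] ≤ √(T(v,σ))`, where `T(v,w) = √(1 − |⟨v,w⟩|²)` for pure states and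
`T(v,σ)` is half the trace norm of `vv† − σ`. -/
theorem stmt8 (d : ℕ) (v : Fin d → ℂ) (hv : ∑ i, ‖v i‖ ^ 2 = 1)
    (σ : Matrix (Fin d) (Fin d) ℂ)
    (hH : (Matrix.vecMulVec v (star v) - σ).IsHermitian)
    (Ω : Type) [MeasurableSpace Ω] (P : Measure Ω) [IsProbabilityMeasure P]
    (w : Ω → Fin d → ℂ)
    (hunit : ∀ ω, ∑ i, ‖w ω i‖ ^ 2 = 1)
    (hmeas : ∀ i, AEStronglyMeasurable (fun ω => w ω i) P)
    (hint : ∀ i j, Integrable (fun ω => w ω i * (starRingEnd ℂ) (w ω j)) P)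
    (hexp : ∀ i j, (∫ ω, w ω i * (starRingEnd ℂ) (w ω j) ∂P) = σ i j) :
    (∫ ω, Real.sqrt (1 - ‖∑ i, (starRingEnd ℂ) (v i) * w ω i‖ ^ 2) ∂P) ≤
      Real.sqrt ((1 / 2) * ∑ i, |hH.eigenvalues i|) := by
  classical
  set ip : Ω → ℂ := fun ω => ∑ i, (starRingEnd ℂ) (v i) * w ω i with hip
  set f : Ω → ℝ := fun ω => 1 - ‖ip ω‖ ^ 2 with hf
  set g : Ω → ℂ := fun ω => ip ω * (starRingEnd ℂ) (ip ω) with hg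
  -- expansion of g
  have hgexp : ∀ ω, g ω = ∑ i, ∑ j, (starRingEnd ℂ) (v i) * v j *
      (w ω i * (starRingEnd ℂ) (w ω j)) := by
    intro ω
    rw [hg, hip]
    simp only [map_sum, Finset.sum_mul_sum]
    exact Finset.sum_congr rfl fun i _ => Finset.sum_congr rfl fun j _ => by
      simp only [_root_.map_mul, Complex.conj_conj]; ring
  have hgint : Integrable g P := by
    rw [show g = fun ω => ∑ i, ∑ j, (starRingEnd ℂ) (v i) * v j *
        (w ω i * (starRingEnd ℂ) (w ω j)) from funext hgexp]
    exact integrable_finset_sum _ fun i _ =>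
      integrable_finset_sum _ fun j _ => (hint i j).const_mul _
  have hgval : ∫ ω, g ω ∂P = ∑ i, ∑ j, (starRingEnd ℂ) (v i) * v j * σ i j := by
    rw [integral_congr_ae (Filter.Eventually.of_forall hgexp),
      integral_finset_sum _ fun i _ =>
        integrable_finset_sum _ fun j _ => (hint i j).const_mul _]
    refine Finset.sum_congr rfl fun i _ => ?_
    rw [integral_finset_sum _ fun j _ => (hint i j).const_mul _]
    refine Finset.sum_congr rfl fun j _ => ?_
    rw [MeasureTheory.integral_const_mul, hexp]
  -- g ω is real and equals ‖ip ω‖^2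
  have hgre : ∀ ω, g ω = ((‖ip ω‖ ^ 2 : ℝ) : ℂ) := fun ω => by
    rw [hg]; push_cast; exact RCLike.mul_conj (ip ω)
  -- f is nonneg: Cauchy-Schwarz
  have h0 : ∀ ω, 0 ≤ f ω := by
    intro ω
    show (0:ℝ) ≤ 1 - ‖ip ω‖ ^ 2
    have h1 : ‖ip ω‖ ≤ ∑ i, ‖v i‖ * ‖w ω i‖ := by
      rw [hip]
      refine (norm_sum_le _ _).trans ?_
      refine Finset.sum_le_sum fun i _ => ?_
      rw [norm_mul, RCLike.norm_conj]
    have h2 : (∑ i, ‖v i‖ * ‖w ω i‖) ^ 2 ≤ 1 := by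
      calc (∑ i, ‖v i‖ * ‖w ω i‖) ^ 2
          ≤ (∑ i, ‖v i‖ ^ 2) * ∑ i, ‖w ω i‖ ^ 2 :=
            Finset.sum_mul_sq_le_sq_mul_sq _ _ _
        _ = 1 := by rw [hv, hunit ω, one_mul]
    have h3 : ‖ip ω‖ ^ 2 ≤ 1 := by
      refine le_trans ?_ h2
      have := norm_nonneg (ip ω)
      nlinarith
    linarith
  -- integrability of f
  have hfeq : (fun ω => 1 - (g ω).re) = f := by
    funext ω
    rw [hf, hgre ω, Complex.ofReal_re]
  have hfint : Integrable f P := by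
    rw [← hfeq]
    exact (integrable_const 1).sub hgint.re
  -- measurability and integrability of sqrt f
  have hipm : AEStronglyMeasurable ip P := by
    rw [hip]
    exact Finset.aestronglyMeasurable_fun_sum _ fun i _ => (hmeas i).const_mul _
  have hfm : AEStronglyMeasurable f P :=
    hfeq ▸ (aestronglyMeasurable_const.sub hgint.re.aestronglyMeasurable)
  have hsfint : Integrable (fun ω => Real.sqrt (f ω)) P := by
    refine Integrable.mono' (integrable_const 1) ?_ ?_
    · exact Real.continuous_sqrt.comp_aestronglyMeasurable hfm
    · refine Filter.Eventually.of_forall fun ω => ?_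
      rw [Real.norm_of_nonneg (Real.sqrt_nonneg _)]
      refine Real.sqrt_le_one.mpr ?_
      show (1:ℝ) - ‖ip ω‖ ^ 2 ≤ 1
      nlinarith [norm_nonneg (ip ω), sq_nonneg ‖ip ω‖]
  -- value of ∫ f
  have hdotv : dotProduct (star v) v = 1 := by
    rw [dot_star_self', hv]; norm_num
  set A : Matrix (Fin d) (Fin d) ℂ := Matrix.vecMulVec v (star v) - σ with hA
  have hterm1 : dotProduct (star v) (Matrix.vecMulVec v (star v) *ᵥ v) = 1 := by
    have hmv : Matrix.vecMulVec v (star v) *ᵥ v = (dotProduct (star v) v) • v := by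
      funext i
      simp only [Matrix.mulVec, Matrix.vecMulVec_apply, dotProduct, Pi.smul_apply,
        smul_eq_mul, Finset.sum_mul, Finset.mul_sum]
      exact Finset.sum_congr rfl fun j _ => by simp [Pi.star_apply]; ring
    rw [hmv, hdotv, one_smul, hdotv]
  have hterm2 : dotProduct (star v) (σ *ᵥ v)
      = ∑ i, ∑ j, (starRingEnd ℂ) (v i) * v j * σ i j := by
    simp only [dotProduct, Matrix.mulVec, Finset.mul_sum, Pi.star_apply,
      RCLike.star_def]
    exact Finset.sum_congr rfl fun i _ => Finset.sum_congr rfl fun j _ => by ring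
  have hq : dotProduct (star v) (A *ᵥ v) = 1 - ∫ ω, g ω ∂P := by
    rw [hA, Matrix.sub_mulVec, dotProduct_sub, hterm1, hterm2, hgval]
  have hintf : ∫ ω, f ω ∂P = (dotProduct (star v) (A *ᵥ v)).re := by
    have heq2 : ∫ ω, f ω ∂P = ∫ ω, (1 - RCLike.re (g ω)) ∂P :=
      integral_congr_ae (Filter.Eventually.of_forall fun ω => congrFun hfeq.symm ω)
    rw [heq2, integral_sub (integrable_const 1) hgint.re, integral_const]
    simp only [probReal_univ, ENNReal.toReal_one, smul_eq_mul, one_mul]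
    rw [integral_re hgint, hq]
    simp
  -- trace A = 0
  have htrA : A.trace = 0 := by
    have h1 : (Matrix.vecMulVec v (star v)).trace = 1 := by
      have : (Matrix.vecMulVec v (star v)).trace = ∑ i, v i * (starRingEnd ℂ) (v i) := by
        simp [Matrix.trace, Matrix.diag, Matrix.vecMulVec_apply, RCLike.star_def]
      rw [this]
      have : ∀ i, v i * (starRingEnd ℂ) (v i) = ((‖v i‖ ^ 2 : ℝ) : ℂ) := fun i => by
        push_cast; exact RCLike.mul_conj (v i)
      rw [Finset.sum_congr rfl fun i _ => this i, ← Complex.ofReal_sum, hv,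
        Complex.ofReal_one]
    have h2 : σ.trace = 1 := by
      have hσd : ∀ i, σ i i = ∫ ω, w ω i * (starRingEnd ℂ) (w ω i) ∂P :=
        fun i => (hexp i i).symm
      have : σ.trace = ∫ ω, (∑ i, w ω i * (starRingEnd ℂ) (w ω i)) ∂P := by
        rw [Matrix.trace, integral_finset_sum _ fun i _ => hint i i]
        exact Finset.sum_congr rfl fun i _ => hσd i
      rw [this]
      have hone : ∀ ω, (∑ i, w ω i * (starRingEnd ℂ) (w ω i)) = 1 := by
        intro ω
        have : ∀ i, w ω i * (starRingEnd ℂ) (w ω i) = ((‖w ω i‖ ^ 2 : ℝ) : ℂ) := fun i => by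
          push_cast; exact RCLike.mul_conj (w ω i)
        rw [Finset.sum_congr rfl fun i _ => this i, ← Complex.ofReal_sum, hunit ω,
          Complex.ofReal_one]
      rw [integral_congr_ae (Filter.Eventually.of_forall hone)]
      simp
    rw [hA, Matrix.trace_sub, h1, h2, sub_self]
  -- finish
  have hjen : (∫ ω, Real.sqrt (f ω) ∂P) ≤ Real.sqrt (∫ ω, f ω ∂P) :=
    jensen_sqrt' P f hfint h0 hsfint
  have hquad : (∫ ω, f ω ∂P) ≤ (1/2) * ∑ i, |hH.eigenvalues i| := by
    rw [hintf]
    exact quad_form_le' hH htrA v hv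
  calc (∫ ω, Real.sqrt (1 - ‖∑ i, (starRingEnd ℂ) (v i) * w ω i‖ ^ 2) ∂P)
      = ∫ ω, Real.sqrt (f ω) ∂P := rfl
    _ ≤ Real.sqrt (∫ ω, f ω ∂P) := hjen
    _ ≤ Real.sqrt ((1 / 2) * ∑ i, |hH.eigenvalues i|) := Real.sqrt_le_sqrt hquad
end

section
/- For any unit vector v ∈ ℂ^d and 1 ≤ k ≤ d, the minimum trace distance from vv† to the convex hull of rank-one projections onto k-sparse unit vectors is at most 1 − k/d. -/
/-
Average the projections onto the normalised restrictions `v_S / ‖v_S‖` of `v` to the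
`k`-subsets `S`, with weights proportional to `‖v_S‖²`. Each index pair `(a, b)` lies in a
fraction `(k - 1)/(d - 1)` of the subsets containing `a`, so the average is
`σ = λ vv† + (1 - λ) diag(|v_i|²)` with `λ = (k - 1)/(d - 1)`, and `vv† - σ` is `1 - λ` times
the off-diagonal part `M` of `vv†`. The matrix `M` has trace zero and is negative
semidefinite on `v^⊥`, so it has at most one positive eigenvalue, and its trace norm is twice
that eigenvalue. A weighted Cauchy–Schwarz inequality bounds the Rayleigh quotient of `M` by
`1 - 1/d`, and `(1 - λ)(1 - 1/d) = 1 - k/d`.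
-/

open Finset Matrix RCLike

-- The tangent line of the concave map `t ↦ t / (t + c)` at `t = 1 - c`.
lemma div_add_le_sq_add_mul {t c : ℝ} (ht : 0 ≤ t) (hc : 0 ≤ c) :
    t / (t + c) ≤ (1 - c) ^ 2 + c * t := by
  rcases (add_nonneg ht hc).eq_or_lt with h | h
  · rw [← h, div_zero]; positivity
  · rw [div_le_iff₀ h]; nlinarith [mul_nonneg hc (sq_nonneg (t + c - 1))]

section Weights

variable {ι : Type*} [Fintype ι]

lemma one_sub_inv_card_nonneg : 0 ≤ 1 - 1 / (Fintype.card ι : ℝ) := by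
  rw [sub_nonneg, one_div]
  exact Nat.cast_inv_le_one _

lemma sum_div_add_one_sub_inv_card_le_one {t : ι → ℝ} (ht : ∀ i, 0 ≤ t i)
    (hsum : ∑ i, t i = 1) :
    ∑ i, t i / (t i + (1 - 1 / Fintype.card ι)) ≤ 1 := by
  set n : ℝ := (Fintype.card ι : ℝ)
  calc ∑ i, t i / (t i + (1 - 1 / n))
      ≤ ∑ i, ((1 / n) ^ 2 + (1 - 1 / n) * t i) := by
        gcongr with i
        simpa using div_add_le_sq_add_mul (ht i) one_sub_inv_card_nonneg
    _ = n * (1 / n) ^ 2 + (1 - 1 / n) := by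
        rw [sum_add_distrib, ← mul_sum, hsum, sum_const, card_univ, nsmul_eq_mul, mul_one]
    _ = 1 := by
        rcases eq_or_ne n 0 with h | h
        · simp [h]
        · field_simp; ring

lemma sq_sum_mul_le {a y : ι → ℝ} (ha : ∑ i, a i ^ 2 = 1) :
    (∑ i, a i * y i) ^ 2
      ≤ ∑ i, a i ^ 2 * y i ^ 2 + (1 - 1 / Fintype.card ι) * ∑ i, y i ^ 2 := by
  set c : ℝ := 1 - 1 / Fintype.card ι
  have hc : 0 ≤ c := one_sub_inv_card_nonneg
  have hweight : ∀ i, (a i * y i) ^ 2 ≤ a i ^ 2 / (a i ^ 2 + c) * ((a i ^ 2 + c) * y i ^ 2) := by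
    intro i
    rcases (add_nonneg (sq_nonneg (a i)) hc).eq_or_lt with h | h
    · have : a i ^ 2 = 0 := by linarith [sq_nonneg (a i)]
      simp [mul_pow, this]
    · exact le_of_eq (by field_simp)
  calc (∑ i, a i * y i) ^ 2
      ≤ (∑ i, a i ^ 2 / (a i ^ 2 + c)) * ∑ i, (a i ^ 2 + c) * y i ^ 2 :=
        sum_sq_le_sum_mul_sum_of_sq_le_mul _ (fun i _ => by positivity) (fun i _ => by positivity)
          fun i _ => hweight i
    _ ≤ 1 * ∑ i, (a i ^ 2 + c) * y i ^ 2 := by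
        gcongr
        exact sum_div_add_one_sub_inv_card_le_one (fun i => sq_nonneg (a i)) ha
    _ = ∑ i, a i ^ 2 * y i ^ 2 + c * ∑ i, y i ^ 2 := by
        simp only [one_mul, add_mul, sum_add_distrib, mul_sum]

end Weights

section OffDiagonal

variable {𝕜 n : Type*} [RCLike 𝕜]

def offDiagOuter [DecidableEq n] (v : n → 𝕜) : Matrix n n 𝕜 :=
  vecMulVec v (star v) - diagonal fun i => v i * star (v i)

lemma isHermitian_offDiagOuter [DecidableEq n] (v : n → 𝕜) : (offDiagOuter v).IsHermitian := by
  refine IsHermitian.sub ?_ (isHermitian_diagonal_of_self_adjoint _ ?_)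
  · rw [IsHermitian, conjTranspose_vecMulVec, star_star]
  · ext i; exact IsSelfAdjoint.mul_star_self (v i)

variable [Fintype n]

lemma norm_star_dotProduct_sq_sub_le {v : n → 𝕜} (hv : ∑ i, ‖v i‖ ^ 2 = 1) (x : n → 𝕜) :
    ‖star v ⬝ᵥ x‖ ^ 2 - ∑ i, ‖v i‖ ^ 2 * ‖x i‖ ^ 2
      ≤ (1 - 1 / Fintype.card n) * ∑ i, ‖x i‖ ^ 2 := by
  have htri : ‖star v ⬝ᵥ x‖ ≤ ∑ i, ‖v i‖ * ‖x i‖ :=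
    (norm_sum_le _ _).trans_eq (by simp [norm_mul])
  have := sq_sum_mul_le (y := fun i => ‖x i‖) hv
  nlinarith [pow_le_pow_left₀ (norm_nonneg _) htri 2]

lemma dotProduct_vecMulVec_mulVec (v x : n → 𝕜) :
    star x ⬝ᵥ (vecMulVec v (star v) *ᵥ x) = star (star v ⬝ᵥ x) * (star v ⬝ᵥ x) := by
  simp only [dotProduct, mulVec, vecMulVec_apply, star_sum, star_mul', star_star, Pi.star_apply,
    sum_mul, mul_sum]
  rw [sum_comm]
  exact sum_congr rfl fun i _ => sum_congr rfl fun j _ => by ring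

variable [DecidableEq n]

lemma dotProduct_diagonal_mul_star_mulVec (v x : n → 𝕜) :
    star x ⬝ᵥ ((diagonal fun i => v i * star (v i)) *ᵥ x)
      = ((∑ i, ‖v i‖ ^ 2 * ‖x i‖ ^ 2 : ℝ) : 𝕜) := by
  simp only [dotProduct, mulVec_diagonal, Pi.star_apply, ofReal_sum, ofReal_mul, ofReal_pow,
    ← RCLike.conj_mul, RCLike.star_def]
  exact sum_congr rfl fun i _ => by ring

lemma trace_offDiagOuter (v : n → 𝕜) : (offDiagOuter v).trace = 0 := by
  simp [offDiagOuter, trace, vecMulVec_apply]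

lemma re_dotProduct_offDiagOuter_mulVec (v x : n → 𝕜) :
    re (star x ⬝ᵥ (offDiagOuter v *ᵥ x)) = ‖star v ⬝ᵥ x‖ ^ 2 - ∑ i, ‖v i‖ ^ 2 * ‖x i‖ ^ 2 := by
  rw [offDiagOuter, sub_mulVec, dotProduct_sub, dotProduct_vecMulVec_mulVec,
    dotProduct_diagonal_mul_star_mulVec, RCLike.star_def, RCLike.conj_mul, ← ofReal_pow, map_sub,
    ofReal_re, ofReal_re]

end OffDiagonal

namespace Matrix.IsHermitian

variable {𝕜 n : Type*} [RCLike 𝕜] [Fintype n] [DecidableEq n] {A : Matrix n n 𝕜}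
  (hA : A.IsHermitian)

lemma star_eigenvectorBasis_dotProduct (i j : n) :
    star ⇑(hA.eigenvectorBasis i) ⬝ᵥ ⇑(hA.eigenvectorBasis j) = if i = j then 1 else 0 := by
  rw [← orthonormal_iff_ite.mp hA.eigenvectorBasis.orthonormal i j,
    EuclideanSpace.inner_eq_star_dotProduct, dotProduct_comm]

lemma sum_norm_eigenvectorBasis_sq (i : n) : ∑ a, ‖hA.eigenvectorBasis i a‖ ^ 2 = 1 := by
  rw [← EuclideanSpace.norm_sq_eq, hA.eigenvectorBasis.orthonormal.1 i, one_pow]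

lemma re_dotProduct_mulVec_eigenvector_add {i j : n} (hij : i ≠ j) (a b : 𝕜) :
    re (star (a • ⇑(hA.eigenvectorBasis i) + b • ⇑(hA.eigenvectorBasis j)) ⬝ᵥ
        (A *ᵥ (a • ⇑(hA.eigenvectorBasis i) + b • ⇑(hA.eigenvectorBasis j))))
      = ‖a‖ ^ 2 * hA.eigenvalues i + ‖b‖ ^ 2 * hA.eigenvalues j := by
  simp only [mulVec_add, mulVec_smul, mulVec_eigenvectorBasis, star_add, star_smul, add_dotProduct,
    dotProduct_add, smul_dotProduct, dotProduct_smul, star_eigenvectorBasis_dotProduct, hij,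
    hij.symm, if_true, if_false]
  simp only [smul_eq_mul, mul_one, mul_zero, add_zero, zero_add, RCLike.real_smul_eq_coe_mul,
    RCLike.star_def, map_add]
  rw [mul_left_comm a, mul_left_comm b, RCLike.mul_conj, RCLike.mul_conj, ← ofReal_pow,
    ← ofReal_pow, ← ofReal_mul, ← ofReal_mul, ofReal_re, ofReal_re]
  ring

lemma eigenvalues_le {c : ℝ}
    (h : ∀ x, re (star x ⬝ᵥ (A *ᵥ x)) ≤ c * ∑ a, ‖x a‖ ^ 2) (i : n) :
    hA.eigenvalues i ≤ c := by
  simpa [← hA.eigenvalues_eq, hA.sum_norm_eigenvectorBasis_sq] using h (hA.eigenvectorBasis i)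

-- Two eigenvectors with positive eigenvalues span a plane on which the form is positive
-- definite, and that plane meets `v^⊥`.
lemma eq_of_eigenvalues_pos (v : n → 𝕜)
    (hperp : ∀ x, star v ⬝ᵥ x = 0 → re (star x ⬝ᵥ (A *ᵥ x)) ≤ 0)
    {i j : n} (hi : 0 < hA.eigenvalues i) (hj : 0 < hA.eigenvalues j) : i = j := by
  by_contra hij
  set u : n → n → 𝕜 := fun l => ⇑(hA.eigenvectorBasis l)
  set z : n → 𝕜 := fun l => star v ⬝ᵥ u l
  by_cases hzi : z i = 0
  · have := hperp (u i) hzi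
    rw [← hA.eigenvalues_eq] at this
    linarith
  · have hx : star v ⬝ᵥ (z j • u i + (-z i) • u j) = 0 := by
      simp only [dotProduct_add, dotProduct_smul, smul_eq_mul]
      ring
    have := hperp _ hx
    rw [hA.re_dotProduct_mulVec_eigenvector_add hij] at this
    have hzi' : 0 < ‖-z i‖ ^ 2 := by rw [norm_neg]; exact pow_pos (norm_pos_iff.2 hzi) 2
    nlinarith [mul_pos hzi' hj, mul_nonneg (sq_nonneg ‖z j‖) hi.le]

lemma half_sum_abs_eigenvalues_le (v : n → 𝕜) {c : ℝ} (hc : 0 ≤ c) (htr : A.trace = 0)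
    (hle : ∀ x, re (star x ⬝ᵥ (A *ᵥ x)) ≤ c * ∑ a, ‖x a‖ ^ 2)
    (hperp : ∀ x, star v ⬝ᵥ x = 0 → re (star x ⬝ᵥ (A *ᵥ x)) ≤ 0) :
    1 / 2 * ∑ i, |hA.eigenvalues i| ≤ c := by
  have hsum : ∑ i, hA.eigenvalues i = 0 := by
    simpa [htr] using (congrArg re hA.trace_eq_sum_eigenvalues).symm
  have habs : ∀ a : ℝ, |a| = 2 * a⁺ - a := fun a => by
    linarith [posPart_add_negPart a, posPart_sub_negPart a]
  have hcard : #{i | 0 < hA.eigenvalues i} ≤ 1 := card_le_one.mpr fun i hi j hj =>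
    hA.eq_of_eigenvalues_pos v hperp (mem_filter.1 hi).2 (mem_filter.1 hj).2
  calc 1 / 2 * ∑ i, |hA.eigenvalues i| = ∑ i ∈ {i | 0 < hA.eigenvalues i}, hA.eigenvalues i := by
        simp only [habs, sum_sub_distrib, ← mul_sum, hsum, posPart_eq_ite_lt, sum_ite,
          sum_const_zero]
        ring
    _ ≤ #{i | 0 < hA.eigenvalues i} • c :=
        sum_le_card_nsmul _ _ _ fun i _ => hA.eigenvalues_le hle i
    _ ≤ c := by
        rw [nsmul_eq_mul]
        exact mul_le_of_le_one_left hc (by exact_mod_cast hcard)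

lemma half_sum_abs_eigenvalues_le_of_eq_smul_offDiagOuter {v : n → 𝕜}
    (hv : ∑ i, ‖v i‖ ^ 2 = 1) {μ : ℝ} (hμ : 0 ≤ μ) (hAv : A = μ • offDiagOuter v) :
    1 / 2 * ∑ i, |hA.eigenvalues i| ≤ μ * (1 - 1 / Fintype.card n) := by
  have hq : ∀ x, re (star x ⬝ᵥ (A *ᵥ x)) = μ * (‖star v ⬝ᵥ x‖ ^ 2 - ∑ i, ‖v i‖ ^ 2 * ‖x i‖ ^ 2) :=
    fun x => by rw [hAv, smul_mulVec, dotProduct_smul, RCLike.smul_re,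
      re_dotProduct_offDiagOuter_mulVec]
  refine hA.half_sum_abs_eigenvalues_le v (mul_nonneg hμ one_sub_inv_card_nonneg)
    (by rw [hAv, trace_smul, trace_offDiagOuter, smul_zero]) (fun x => ?_) (fun x hx => ?_)
  · rw [hq, mul_assoc]
    exact mul_le_mul_of_nonneg_left (norm_star_dotProduct_sq_sub_le hv x) hμ
  · rw [hq, hx, norm_zero]
    exact mul_nonpos_of_nonneg_of_nonpos hμ (by simp; positivity)

end Matrix.IsHermitian

-- The generators of the paper's `I_k`: projections onto `k`-sparse unit vectors.
def sparsePureStates (n : Type*) [Fintype n] (k : ℕ) : Set (Matrix n n ℂ) :=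
  {A | ∃ w : n → ℂ, (∑ i, ‖w i‖ ^ 2 = 1) ∧ Set.ncard {i | w i ≠ 0} ≤ k ∧
    A = vecMulVec w (star w)}

section SparseMixture

variable {n : Type*}

lemma ncard_indicator_ne_zero_le (S : Finset n) (v : n → ℂ) :
    {i | (S : Set n).indicator v i ≠ 0}.ncard ≤ #S := by
  rw [← Set.ncard_coe_finset]
  exact Set.ncard_le_ncard fun i hi => by_contra fun h => hi (Set.indicator_of_notMem h _)

lemma sum_vecMulVec_indicator_apply [DecidableEq n] (𝒮 : Finset (Finset n)) (v : n → ℂ)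
    (a b : n) :
    (∑ S ∈ 𝒮, vecMulVec ((S : Set n).indicator v) (star ((S : Set n).indicator v))) a b
      = #{S ∈ 𝒮 | a ∈ S ∧ b ∈ S} * (v a * star (v b)) := by
  simp only [Matrix.sum_apply, vecMulVec_apply, Pi.star_apply, Set.indicator_apply, mem_coe]
  rw [card_filter, Nat.cast_sum, sum_mul]
  refine sum_congr rfl fun S _ => ?_
  by_cases ha : a ∈ S <;> by_cases hb : b ∈ S <;> simp [ha, hb]

variable [Fintype n]

lemma vecMulVec_star_eq_smul_normalize (u : n → ℂ) :
    vecMulVec u (star u) = (∑ i, ‖u i‖ ^ 2) •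
      vecMulVec ((√(∑ i, ‖u i‖ ^ 2))⁻¹ • u) (star ((√(∑ i, ‖u i‖ ^ 2))⁻¹ • u)) := by
  set r := ∑ i, ‖u i‖ ^ 2
  rcases (sum_nonneg fun i _ => sq_nonneg ‖u i‖ : 0 ≤ r).eq_or_lt with hr | hr
  · have hu : u = 0 := funext fun i => by
      simpa using (sum_eq_zero_iff_of_nonneg fun i _ => sq_nonneg ‖u i‖).1 hr.symm i (mem_univ i)
    simp [hu]
  · rw [star_smul, star_trivial (√r)⁻¹, smul_vecMulVec, vecMulVec_smul, smul_smul, smul_smul,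
      mul_assoc, ← mul_inv, Real.mul_self_sqrt hr.le, mul_inv_cancel₀ hr.ne', one_smul]

lemma normalize_mem_sparsePureStates {k : ℕ} {u : n → ℂ} (hu : {i | u i ≠ 0}.ncard ≤ k)
    (hr : ∑ i, ‖u i‖ ^ 2 ≠ 0) :
    vecMulVec ((√(∑ i, ‖u i‖ ^ 2))⁻¹ • u) (star ((√(∑ i, ‖u i‖ ^ 2))⁻¹ • u))
      ∈ sparsePureStates n k := by
  set r := ∑ i, ‖u i‖ ^ 2
  have hr0 : 0 < r := lt_of_le_of_ne (sum_nonneg fun i _ => sq_nonneg _) (Ne.symm hr)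
  refine ⟨_, ?_, ?_, rfl⟩
  · simp only [Pi.smul_apply, norm_smul, mul_pow, ← mul_sum, Real.norm_eq_abs, abs_inv,
      abs_of_nonneg (Real.sqrt_nonneg r), inv_pow, Real.sq_sqrt hr0.le]
    exact inv_mul_cancel₀ hr
  · have hc : √r ≠ 0 := (Real.sqrt_pos.2 hr0).ne'
    simpa [Pi.smul_apply, smul_ne_zero_iff, hc] using hu

lemma inv_smul_sum_vecMulVec_mem_convexHull {ι : Type*} {k : ℕ} (t : Finset ι)
    (u : ι → n → ℂ) (hu : ∀ s ∈ t, {i | u s i ≠ 0}.ncard ≤ k)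
    (hpos : 0 < ∑ s ∈ t, ∑ i, ‖u s i‖ ^ 2) :
    (∑ s ∈ t, ∑ i, ‖u s i‖ ^ 2)⁻¹ • ∑ s ∈ t, vecMulVec (u s) (star (u s))
      ∈ convexHull ℝ (sparsePureStates n k) := by
  classical
  set r : ι → ℝ := fun s => ∑ i, ‖u s i‖ ^ 2
  set P : ι → Matrix n n ℂ := fun s =>
    vecMulVec ((√(r s))⁻¹ • u s) (star ((√(r s))⁻¹ • u s))
  have hcm : t.centerMass r P = (∑ s ∈ t, r s)⁻¹ • ∑ s ∈ t, vecMulVec (u s) (star (u s)) := by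
    simp only [centerMass, P, r, ← vecMulVec_star_eq_smul_normalize]
  rw [← hcm, ← centerMass_filter_ne_zero]
  refine centerMass_mem_convexHull _ (fun s _ => sum_nonneg fun i _ => sq_nonneg _)
    (by rwa [sum_filter_ne_zero]) fun s hs => ?_
  obtain ⟨hst, hs0⟩ := mem_filter.1 hs
  exact normalize_mem_sparsePureStates (hu s hst) hs0

variable [DecidableEq n]

lemma sum_sum_norm_indicator_sq (𝒮 : Finset (Finset n)) (v : n → ℂ) :
    ∑ S ∈ 𝒮, ∑ i, ‖(S : Set n).indicator v i‖ ^ 2 = ∑ i, #{S ∈ 𝒮 | i ∈ S} * ‖v i‖ ^ 2 := by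
  rw [sum_comm]
  refine sum_congr rfl fun i _ => ?_
  rw [card_filter, Nat.cast_sum, sum_mul]
  refine sum_congr rfl fun S _ => ?_
  by_cases hi : i ∈ S <;> simp [hi]

lemma card_filter_mem_powersetCard {k : ℕ} (hk : 1 ≤ k) (a : n) :
    #{S ∈ (univ : Finset n).powersetCard k | a ∈ S} = (Fintype.card n - 1).choose (k - 1) := by
  simpa [singleton_subset_iff] using
    card_filter_powersetCard_subset {a} univ k (subset_univ _) (by simpa using hk)

lemma card_filter_pair_mem_powersetCard_mul {k : ℕ} (hk : 1 ≤ k) {a b : n} (hab : a ≠ b) :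
    #{S ∈ (univ : Finset n).powersetCard k | a ∈ S ∧ b ∈ S} * (Fintype.card n - 1)
      = (Fintype.card n - 1).choose (k - 1) * (k - 1) := by
  rcases hk.eq_or_lt with rfl | hk2
  · simp only [tsub_self, mul_zero, mul_eq_zero, card_eq_zero, filter_eq_empty_iff,
      mem_powersetCard_univ, not_and]
    exact Or.inl fun S hS ha hb => hab (card_le_one.1 hS.le a ha b hb)
  · have hsub := card_filter_powersetCard_subset {a, b} univ k (subset_univ _)
      (by rw [card_pair hab]; omega)
    simp only [card_pair hab, card_univ, insert_subset_iff, singleton_subset_iff] at hsub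
    rw [hsub]
    obtain ⟨m, hm⟩ : ∃ m, Fintype.card n = m + 2 :=
      ⟨Fintype.card n - 2, by have := Fintype.one_lt_card_iff.2 ⟨a, b, hab⟩; omega⟩
    obtain ⟨j, rfl⟩ : ∃ j, k = j + 2 := ⟨k - 2, by omega⟩
    simpa [hm, mul_comm] using Nat.add_one_mul_choose_eq m j

noncomputable def sparseMixture (v : n → ℂ) (k : ℕ) : Matrix n n ℂ :=
  ((Fintype.card n - 1).choose (k - 1) : ℝ)⁻¹ • ∑ S ∈ (univ : Finset n).powersetCard k,
    vecMulVec ((S : Set n).indicator v) (star ((S : Set n).indicator v))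

lemma sparseMixture_mem_convexHull {k : ℕ} (hk : 1 ≤ k) (hkn : k ≤ Fintype.card n)
    {v : n → ℂ} (hv : ∑ i, ‖v i‖ ^ 2 = 1) :
    sparseMixture v k ∈ convexHull ℝ (sparsePureStates n k) := by
  have htotal : ∑ S ∈ (univ : Finset n).powersetCard k, ∑ i, ‖(S : Set n).indicator v i‖ ^ 2
      = (Fintype.card n - 1).choose (k - 1) := by
    simp [sum_sum_norm_indicator_sq, card_filter_mem_powersetCard hk, ← mul_sum, hv]
  have hchoose : 0 < (Fintype.card n - 1).choose (k - 1) := Nat.choose_pos (by omega)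
  rw [sparseMixture, ← htotal]
  exact inv_smul_sum_vecMulVec_mem_convexHull _ _
    (fun S hS => (ncard_indicator_ne_zero_le S v).trans (mem_powersetCard.1 hS).2.le)
    (by rw [htotal]; exact_mod_cast hchoose)

lemma vecMulVec_sub_sparseMixture {k : ℕ} (hk : 1 ≤ k) (hkn : k ≤ Fintype.card n)
    (v : n → ℂ) :
    vecMulVec v (star v) - sparseMixture v k
      = (1 - ((k : ℝ) - 1) / ((Fintype.card n : ℝ) - 1)) • offDiagOuter v := by
  have hchoose : (Fintype.card n - 1).choose (k - 1) ≠ 0 := (Nat.choose_pos (by omega)).ne'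
  ext a b
  simp only [sparseMixture, offDiagOuter, Matrix.sub_apply, Matrix.smul_apply,
    sum_vecMulVec_indicator_apply, vecMulVec_apply, diagonal_apply, Complex.real_smul,
    Pi.star_apply]
  by_cases hab : a = b
  · subst hab
    simp only [and_self, card_filter_mem_powersetCard hk, if_true, sub_self, mul_zero]
    push_cast
    rw [inv_mul_cancel_left₀ (by exact_mod_cast hchoose), sub_self]
  · have hpair := card_filter_pair_mem_powersetCard_mul (n := n) hk hab
    have hn : 2 ≤ Fintype.card n := Fintype.one_lt_card_iff.2 ⟨a, b, hab⟩
    have hcast := congrArg (Nat.cast (R := ℝ)) hpair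
    push_cast [Nat.cast_sub (by omega : 1 ≤ Fintype.card n), Nat.cast_sub hk] at hcast
    have hratio : ((Fintype.card n - 1).choose (k - 1) : ℝ)⁻¹
        * #{S ∈ (univ : Finset n).powersetCard k | a ∈ S ∧ b ∈ S}
        = ((k : ℝ) - 1) / ((Fintype.card n : ℝ) - 1) := by
      have : (Fintype.card n : ℝ) - 1 ≠ 0 := by
        have : (2 : ℝ) ≤ Fintype.card n := by exact_mod_cast hn
        linarith
      field_simp
      linarith
    simp only [hab, if_false, sub_zero, ← hratio]
    push_cast
    ring

end SparseMixture

lemma one_sub_div_sub_one_nonneg {k d : ℝ} (hk : 1 ≤ k) (hkd : k ≤ d) :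
    0 ≤ 1 - (k - 1) / (d - 1) :=
  sub_nonneg.2 (div_le_one_of_le₀ (by linarith) (by linarith))

lemma one_sub_div_sub_one_mul_one_sub_inv {k d : ℝ} (hk : 1 ≤ k) (hkd : k ≤ d) :
    (1 - (k - 1) / (d - 1)) * (1 - 1 / d) = 1 - k / d := by
  rcases (hk.trans hkd).eq_or_lt with hd | hd
  · obtain rfl : k = 1 := le_antisymm (hd ▸ hkd) hk
    simp [← hd]
  · have : d - 1 ≠ 0 := by linarith
    field_simp
    ring

/-- for any unit vector `v ∈ ℂ^d` and `1 ≤ k ≤ d` there exists a state in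
the convex hull of rank-one projections onto `k`-sparse unit vectors whose trace distance
to `vv†` is at most `1 − k/d`. -/
theorem stmt15 (d k : ℕ) (hk : 1 ≤ k) (hkd : k ≤ d)
    (v : Fin d → ℂ) (hv : ∑ i, ‖v i‖ ^ 2 = 1) :
    ∃ σ ∈ convexHull ℝ
        {A : Matrix (Fin d) (Fin d) ℂ | ∃ w : Fin d → ℂ,
          (∑ i, ‖w i‖ ^ 2 = 1) ∧ Set.ncard {i | w i ≠ 0} ≤ k ∧
            A = Matrix.vecMulVec w (star w)},
      ∃ h : (Matrix.vecMulVec v (star v) - σ).IsHermitian,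
        (1 / 2) * ∑ i, |h.eigenvalues i| ≤ 1 - (k : ℝ) / d := by
  have hkd' : k ≤ Fintype.card (Fin d) := by rwa [Fintype.card_fin]
  have hD := vecMulVec_sub_sparseMixture hk hkd' v
  have hherm : (vecMulVec v (star v) - sparseMixture v k).IsHermitian := by
    rw [hD]
    exact (isHermitian_offDiagOuter v).smul (IsSelfAdjoint.all _)
  refine ⟨sparseMixture v k, sparseMixture_mem_convexHull hk hkd' hv, hherm, ?_⟩
  have hkr : (1 : ℝ) ≤ k := by exact_mod_cast hk
  have hkdr : (k : ℝ) ≤ d := by exact_mod_cast hkd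
  rw [Fintype.card_fin] at hD
  calc 1 / 2 * ∑ i, |hherm.eigenvalues i|
      ≤ (1 - ((k : ℝ) - 1) / ((d : ℝ) - 1)) * (1 - 1 / Fintype.card (Fin d)) :=
        hherm.half_sum_abs_eigenvalues_le_of_eq_smul_offDiagOuter hv
          (one_sub_div_sub_one_nonneg hkr hkdr) hD
    _ = 1 - (k : ℝ) / d := by
        rw [Fintype.card_fin, one_sub_div_sub_one_mul_one_sub_inv hkr hkdr]
end
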